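/- Define u_1(x) = x⁴/4 + x⁶/6, u_2(x) = (3/4)x^{4/3} + (3/8)x^{8/3}, u_3(x) = (5/6)x^{6/5} + (5/8)x^{8/5} (with fractional powers interpreted via odd roots, so defined for all real x). Then x_1x_2 + x_2x_3 + x_3x_1 ≤ u_1(x_1) + u_2(x_2) + u_3(x_3) for all (x_1,x_2,x_3) ∈ ℝ³, with equality if and only if there exists t ∈ ℝ with (x_1,x_2,x_3) = (t, t³, t⁵). -/
import Mathlib

/-- The real `q`-th root (for odd `q`), defined for all real `x`. -/
noncomputable def oddRoot (q : ℕ) (x : ℝ) : ℝ :=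
  if 0 ≤ x then x ^ ((1 : ℝ) / q) else -((-x) ^ ((1 : ℝ) / q))

noncomputable def w₁ (x : ℝ) : ℝ := x ^ 4 / 4 + x ^ 6 / 6

noncomputable def w₂ (x : ℝ) : ℝ :=
  (3/4) * (oddRoot 3 x) ^ 4 + (3/8) * (oddRoot 3 x) ^ 8

noncomputable def w₃ (x : ℝ) : ℝ :=
  (5/6) * (oddRoot 5 x) ^ 6 + (5/8) * (oddRoot 5 x) ^ 8

lemma oddRoot_pow {q : ℕ} (hq : Odd q) (x : ℝ) : (oddRoot q x) ^ q = x := by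
  have hq0 : (q : ℝ) ≠ 0 := by
    exact_mod_cast hq.pos.ne'
  unfold oddRoot
  split_ifs with h
  · rw [← Real.rpow_natCast (x ^ ((1:ℝ)/q)) q, ← Real.rpow_mul h]
    rw [one_div_mul_cancel hq0, Real.rpow_one]
  · have hx : (0:ℝ) ≤ -x := by linarith
    rw [hq.neg_pow, ← Real.rpow_natCast ((-x) ^ ((1:ℝ)/q)) q, ← Real.rpow_mul hx]
    rw [one_div_mul_cancel hq0, Real.rpow_one, neg_neg]

lemma oddRoot_pow_self {q : ℕ} (hq : Odd q) (t : ℝ) : oddRoot q (t ^ q) = t := by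
  have h := oddRoot_pow hq (t ^ q)
  exact (Odd.strictMono_pow (R := ℝ) hq).injective h

lemma young1 (a s : ℝ) : a * s ^ 3 ≤ a ^ 4 / 4 + 3/4 * s ^ 4 := by
  nlinarith [mul_nonneg (sq_nonneg (a - s)) (sq_nonneg (a + s)),
    mul_nonneg (sq_nonneg (a - s)) (sq_nonneg s)]

lemma young1_eq {a s : ℝ} (h : a * s ^ 3 = a ^ 4 / 4 + 3/4 * s ^ 4) : a = s := by
  have key : (a - s) ^ 2 * ((a + s) ^ 2 + 2 * s ^ 2) = 0 := by linear_combination (-4 : ℝ) * h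
  rcases mul_eq_zero.mp key with h1 | h1
  · have := pow_eq_zero_iff (n := 2) (by norm_num) |>.mp h1
    linarith
  · have hs : s = 0 := by nlinarith [sq_nonneg (a + s), sq_nonneg s]
    have ha : a + s = 0 := by nlinarith [sq_nonneg (a + s), sq_nonneg s]
    linarith

lemma young2 (s r : ℝ) : s ^ 3 * r ^ 5 ≤ 3/8 * s ^ 8 + 5/8 * r ^ 8 := by
  nlinarith [mul_nonneg (sq_nonneg (s - r)) (sq_nonneg (s^3 + s^2*r)),
    mul_nonneg (sq_nonneg (s - r)) (sq_nonneg (s^2*r + s*r^2)),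
    mul_nonneg (sq_nonneg (s - r)) (sq_nonneg (s*r^2 + 5/9*r^3)),
    mul_nonneg (sq_nonneg (s - r)) (mul_nonneg (sq_nonneg (r*r)) (sq_nonneg r))]

lemma q1_nonneg (s r : ℝ) : 0 ≤ 3*s^6 + 6*s^5*r + 9*s^4*r^2 + 12*s^3*r^3 + 15*s^2*r^4 + 10*s*r^5 + 5*r^6 := by
  nlinarith [sq_nonneg (s^3 + s^2*r), sq_nonneg (s^2*r + s*r^2),
    sq_nonneg (s*r^2 + 5/9*r^3), mul_nonneg (sq_nonneg (r*r)) (sq_nonneg r)]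

lemma young2_eq {s r : ℝ} (h : s ^ 3 * r ^ 5 = 3/8 * s ^ 8 + 5/8 * r ^ 8) : s = r := by
  have key : (s - r) ^ 2 *
      (3*s^6 + 6*s^5*r + 9*s^4*r^2 + 12*s^3*r^3 + 15*s^2*r^4 + 10*s*r^5 + 5*r^6) = 0 := by
    linear_combination (-8 : ℝ) * h
  rcases mul_eq_zero.mp key with h1 | h1
  · have := pow_eq_zero_iff (n := 2) (by norm_num) |>.mp h1
    linarith
  · have hr6 : r ^ 6 = 0 := by
      have h1' : r ^ 6 ≤ 0 := by
        nlinarith [sq_nonneg (s^3 + s^2*r), sq_nonneg (s^2*r + s*r^2),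
          sq_nonneg (s*r^2 + 5/9*r^3)]
      have : (0:ℝ) ≤ r ^ 6 := by positivity
      linarith
    have hr : r = 0 := by
      exact pow_eq_zero_iff (n := 6) (by norm_num) |>.mp hr6
    subst hr
    have hs6 : s ^ 6 = 0 := by nlinarith
    have hs : s = 0 := pow_eq_zero_iff (n := 6) (by norm_num) |>.mp hs6
    simp [hs]

lemma young3 (r a : ℝ) : r ^ 5 * a ≤ 5/6 * r ^ 6 + a ^ 6 / 6 := by
  nlinarith [mul_nonneg (sq_nonneg (a - r)) (sq_nonneg (a^2 + a*r)),
    mul_nonneg (sq_nonneg (a - r)) (sq_nonneg (a*r + r^2)),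
    mul_nonneg (sq_nonneg (a - r)) (sq_nonneg (r*r))]

lemma young3_eq {r a : ℝ} (h : r ^ 5 * a = 5/6 * r ^ 6 + a ^ 6 / 6) : r = a := by
  have key : (a - r) ^ 2 * ((a^2 + a*r)^2 + 2*(a*r + r^2)^2 + 3*r^4) = 0 := by
    linear_combination (-6 : ℝ) * h
  rcases mul_eq_zero.mp key with h1 | h1
  · have := pow_eq_zero_iff (n := 2) (by norm_num) |>.mp h1
    linarith
  · have hr4 : r ^ 4 = 0 := by
      have h1' : r ^ 4 ≤ 0 := by nlinarith [sq_nonneg (a^2 + a*r), sq_nonneg (a*r + r^2)]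
      have : (0:ℝ) ≤ r ^ 4 := by positivity
      linarith
    have hr : r = 0 := pow_eq_zero_iff (n := 4) (by norm_num) |>.mp hr4
    subst hr
    have ha4 : a ^ 4 = 0 := by nlinarith [sq_nonneg (a^2)]
    have ha : a = 0 := pow_eq_zero_iff (n := 4) (by norm_num) |>.mp ha4
    simp [ha]

theorem knott_smith_example (x₁ x₂ x₃ : ℝ) :
    (x₁ * x₂ + x₂ * x₃ + x₃ * x₁ ≤ w₁ x₁ + w₂ x₂ + w₃ x₃) ∧
      (x₁ * x₂ + x₂ * x₃ + x₃ * x₁ = w₁ x₁ + w₂ x₂ + w₃ x₃ ↔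
        ∃ t : ℝ, x₁ = t ∧ x₂ = t ^ 3 ∧ x₃ = t ^ 5) := by
  set s := oddRoot 3 x₂ with hs_def
  set r := oddRoot 5 x₃ with hr_def
  have hs : s ^ 3 = x₂ := oddRoot_pow (by decide) x₂
  have hr : r ^ 5 = x₃ := oddRoot_pow (by decide) x₃
  have hw1 : w₁ x₁ = x₁ ^ 4 / 4 + x₁ ^ 6 / 6 := rfl
  have hw2 : w₂ x₂ = 3/4 * s ^ 4 + 3/8 * s ^ 8 := rfl
  have hw3 : w₃ x₃ = 5/6 * r ^ 6 + 5/8 * r ^ 8 := rfl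
  have hy1 := young1 x₁ s
  have hy2 := young2 s r
  have hy3 := young3 r x₁
  have hle : x₁ * x₂ + x₂ * x₃ + x₃ * x₁ ≤ w₁ x₁ + w₂ x₂ + w₃ x₃ := by
    rw [hw1, hw2, hw3, ← hs, ← hr]; nlinarith [hy1, hy2, hy3]
  refine ⟨hle, ?_, ?_⟩
  · intro h
    rw [hw1, hw2, hw3, ← hs, ← hr] at h
    have e1 : x₁ * s ^ 3 = x₁ ^ 4 / 4 + 3/4 * s ^ 4 := by nlinarith [hy1, hy2, hy3]
    have e2 : s ^ 3 * r ^ 5 = 3/8 * s ^ 8 + 5/8 * r ^ 8 := by nlinarith [hy1, hy2, hy3]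
    have has : x₁ = s := young1_eq e1
    have hsr : s = r := young2_eq e2
    exact ⟨x₁, rfl, by rw [← hs, has], by rw [← hr, has, hsr]⟩
  · rintro ⟨t, rfl, rfl, rfl⟩
    have h3 : s = x₁ := oddRoot_pow_self (q := 3) (by decide) x₁
    have h5 : r = x₁ := oddRoot_pow_self (q := 5) (by decide) x₁
    rw [hw1, hw2, hw3, h3, h5]; ring
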